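/- arXiv:1807.05509 — 3 statements merged into one kernel-verified Lean document; each statement's English description precedes it below -/
import Mathlib

section
/- Let σ ∈ (0,1/2), and let λ±(ρ) = (ρ^{2σ}/2)(-1 ± √(1-4ρ^{2(1-2σ)})) for ρ^{1-2σ} < 1/2 (real case) and λ±(ρ) = (ρ^{2σ}/2)(-1 ± i√(4ρ^{2(1-2σ)}-1)) for ρ^{1-2σ} > 1/2 (complex case). Define K̂₁(t,ρ) = (e^{λ₊(ρ)t} - e^{λ₋(ρ)t})/(λ₊(ρ) - λ₋(ρ)). Then for ρ ∈ [2^{-3/(1-2σ)}, 2], |K̂₁(t,ρ)| ≤ t e^{-2ε_σ t} where ε_σ = 2^{-6/(1-2σ)-1}, so in particular |K̂₁(t,ρ)| ≤ C e^{-ε_σ t} for all t ≥ 0. -/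
private lemma aux_complex (r s t E : ℝ) (hr0 : 0 < r) (hs0 : 0 < s) (ht : 0 ≤ t)
    (hrE : E ≤ r) :
    ‖(Complex.exp ((r:ℂ) * (-1 + Complex.I * (s:ℂ)) * (t:ℂ)) -
      Complex.exp ((r:ℂ) * (-1 - Complex.I * (s:ℂ)) * (t:ℂ))) /
      (((r:ℂ)) * (-1 + Complex.I * (s:ℂ)) - ((r:ℂ)) * (-1 - Complex.I * (s:ℂ)))‖ ≤
      t * Real.exp (-E*t) := by
  set θ : ℝ := r * s * t with hθ
  have hθ0 : 0 ≤ θ := by rw [hθ]; positivity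
  have hnum : Complex.exp ((r:ℂ) * (-1 + Complex.I * (s:ℂ)) * (t:ℂ)) -
      Complex.exp ((r:ℂ) * (-1 - Complex.I * (s:ℂ)) * (t:ℂ)) =
      ((Real.exp (-(r*t)) * (2 * Real.sin θ) : ℝ) : ℂ) * Complex.I := by
    have e1 : (r:ℂ) * (-1 + Complex.I * (s:ℂ)) * (t:ℂ) =
        ((-(r*t) : ℝ) : ℂ) + ((θ : ℝ) : ℂ) * Complex.I := by
      rw [hθ]; push_cast; ring
    have e2 : (r:ℂ) * (-1 - Complex.I * (s:ℂ)) * (t:ℂ) =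
        ((-(r*t) : ℝ) : ℂ) + ((-θ : ℝ) : ℂ) * Complex.I := by
      rw [hθ]; push_cast; ring
    rw [e1, e2, Complex.exp_add, Complex.exp_add, Complex.exp_mul_I, Complex.exp_mul_I,
      ← Complex.ofReal_exp, ← Complex.ofReal_cos, ← Complex.ofReal_sin,
      ← Complex.ofReal_cos, ← Complex.ofReal_sin, Real.cos_neg, Real.sin_neg]
    push_cast
    ring
  have hden : ((r:ℂ)) * (-1 + Complex.I * (s:ℂ)) - ((r:ℂ)) * (-1 - Complex.I * (s:ℂ)) =
      ((2 * r * s : ℝ) : ℂ) * Complex.I := by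
    push_cast; ring
  rw [hnum, hden, mul_div_mul_right _ _ Complex.I_ne_zero, ← Complex.ofReal_div,
    Complex.norm_real, Real.norm_eq_abs]
  have hrs : (0:ℝ) < 2 * r * s := by positivity
  rw [abs_div, abs_of_pos hrs, div_le_iff₀ hrs]
  have hsin : |Real.exp (-(r*t)) * (2 * Real.sin θ)| ≤ Real.exp (-(r*t)) * (2 * θ) := by
    rw [abs_mul, abs_of_pos (Real.exp_pos _), abs_mul, abs_of_pos (by norm_num : (0:ℝ) < 2)]
    have h2 := Real.abs_sin_le_abs (x := θ)
    rw [abs_of_nonneg hθ0] at h2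
    nlinarith [Real.exp_pos (-(r*t))]
  calc |Real.exp (-(r*t)) * (2 * Real.sin θ)| ≤ Real.exp (-(r*t)) * (2 * θ) := hsin
    _ = t * Real.exp (-(r*t)) * (2 * r * s) := by rw [hθ]; ring
    _ ≤ t * Real.exp (-E*t) * (2 * r * s) := by
        apply mul_le_mul_of_nonneg_right _ hrs.le
        apply mul_le_mul_of_nonneg_left _ ht
        apply Real.exp_le_exp.2
        nlinarith

private lemma aux_real (A B t E : ℝ) (hBA : B < A) (hA : A ≤ -E) (ht : 0 ≤ t) :
    ‖(Complex.exp ((A:ℂ) * (t:ℂ)) - Complex.exp ((B:ℂ) * (t:ℂ))) / ((A:ℂ) - (B:ℂ))‖ ≤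
      t * Real.exp (-E*t) := by
  have hABpos : 0 < A - B := by linarith
  have hcast : (Complex.exp ((A:ℂ) * (t:ℂ)) - Complex.exp ((B:ℂ) * (t:ℂ))) /
      ((A:ℂ) - (B:ℂ)) = (((Real.exp (A*t) - Real.exp (B*t)) / (A - B) : ℝ) : ℂ) := by
    push_cast [Complex.ofReal_exp]
    norm_num
  rw [hcast, Complex.norm_real, Real.norm_eq_abs]
  have hexp_le : Real.exp (A*t) - Real.exp (B*t) ≤ (A - B) * (t * Real.exp (A*t)) := by
    have h1 := Real.add_one_le_exp (B*t - A*t)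
    have h2 : Real.exp (B*t) = Real.exp (A*t) * Real.exp (B*t - A*t) := by
      rw [← Real.exp_add]; ring_nf
    nlinarith [Real.exp_pos (A*t)]
  have hq_nonneg : 0 ≤ (Real.exp (A*t) - Real.exp (B*t)) / (A - B) := by
    apply div_nonneg _ hABpos.le
    have := Real.exp_le_exp.2 (mul_le_mul_of_nonneg_right hBA.le ht)
    linarith
  rw [abs_of_nonneg hq_nonneg, div_le_iff₀ hABpos]
  calc Real.exp (A*t) - Real.exp (B*t) ≤ (A - B) * (t * Real.exp (A*t)) := hexp_le
    _ ≤ (A - B) * (t * Real.exp (-E*t)) := by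
        apply mul_le_mul_of_nonneg_left _ hABpos.le
        apply mul_le_mul_of_nonneg_left _ ht
        exact Real.exp_le_exp.2 (mul_le_mul_of_nonneg_right hA ht)
    _ = t * Real.exp (-E*t) * (A - B) := by ring

/-- middle-frequency decay of the symbol
K̂₁(t,ρ) = (e^{λ₊(ρ)t} - e^{λ₋(ρ)t})/(λ₊(ρ) - λ₋(ρ)): on the band
ρ ∈ [2^{-3/(1-2σ)}, 2], |K̂₁(t,ρ)| ≤ t e^{-2ε_σ t} with ε_σ = 2^{-6/(1-2σ)-1},
so |K̂₁(t,ρ)| ≤ C e^{-ε_σ t}. -/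
theorem stmt_10 (σ : ℝ) (hσ : σ ∈ Set.Ioo (0:ℝ) (1/2))
    (lamP lamM : ℝ → ℂ)
    (hlamP1 : ∀ ρ : ℝ, 0 < ρ → ρ ^ (1-2*σ) < 1/2 →
      lamP ρ = (((ρ ^ (2*σ) / 2) * (-1 + Real.sqrt (1 - 4*ρ ^ (2*(1-2*σ)))) : ℝ) : ℂ))
    (hlamM1 : ∀ ρ : ℝ, 0 < ρ → ρ ^ (1-2*σ) < 1/2 →
      lamM ρ = (((ρ ^ (2*σ) / 2) * (-1 - Real.sqrt (1 - 4*ρ ^ (2*(1-2*σ)))) : ℝ) : ℂ))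
    (hlamP2 : ∀ ρ : ℝ, 0 < ρ → ρ ^ (1-2*σ) > 1/2 →
      lamP ρ = ((ρ ^ (2*σ) / 2 : ℝ) : ℂ) *
        (-1 + Complex.I * ((Real.sqrt (4*ρ ^ (2*(1-2*σ)) - 1) : ℝ) : ℂ)))
    (hlamM2 : ∀ ρ : ℝ, 0 < ρ → ρ ^ (1-2*σ) > 1/2 →
      lamM ρ = ((ρ ^ (2*σ) / 2 : ℝ) : ℂ) *
        (-1 - Complex.I * ((Real.sqrt (4*ρ ^ (2*(1-2*σ)) - 1) : ℝ) : ℂ)))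
    (hlameq : ∀ ρ : ℝ, 0 < ρ → ρ ^ (1-2*σ) = 1/2 →
      lamP ρ = ((-(ρ ^ (2*σ)) / 2 : ℝ) : ℂ) ∧ lamM ρ = ((-(ρ ^ (2*σ)) / 2 : ℝ) : ℂ)) :
    (∀ t : ℝ, 0 ≤ t → ∀ ρ ∈ Set.Icc ((2:ℝ) ^ (-3/(1-2*σ))) 2,
      ‖(Complex.exp (lamP ρ * (t:ℂ)) - Complex.exp (lamM ρ * (t:ℂ))) / (lamP ρ - lamM ρ)‖ ≤
        t * Real.exp (-2 * (2:ℝ) ^ (-6/(1-2*σ) - 1) * t)) ∧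
    ∃ C : ℝ, 0 < C ∧ ∀ t : ℝ, 0 ≤ t → ∀ ρ ∈ Set.Icc ((2:ℝ) ^ (-3/(1-2*σ))) 2,
      ‖(Complex.exp (lamP ρ * (t:ℂ)) - Complex.exp (lamM ρ * (t:ℂ))) / (lamP ρ - lamM ρ)‖ ≤
        C * Real.exp (-((2:ℝ) ^ (-6/(1-2*σ) - 1)) * t) := by
  obtain ⟨hσ0, hσ2⟩ := hσ
  have hβ : 0 < 1 - 2*σ := by linarith
  set ε : ℝ := (2:ℝ) ^ (-6/(1-2*σ) - 1) with hεdef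
  set E : ℝ := (2:ℝ) ^ (-6/(1-2*σ)) with hEdef
  have hε : 0 < ε := Real.rpow_pos_of_pos (by norm_num) _
  have hEpos : 0 < E := Real.rpow_pos_of_pos (by norm_num) _
  have h2ε : 2 * ε = E := by
    rw [hεdef, hEdef, show -6/(1-2*σ) - 1 = -6/(1-2*σ) + (-1) by ring,
      Real.rpow_add (by norm_num : (0:ℝ) < 2), Real.rpow_neg_one]
    ring
  have main : ∀ t : ℝ, 0 ≤ t → ∀ ρ ∈ Set.Icc ((2:ℝ) ^ (-3/(1-2*σ))) 2,
      ‖(Complex.exp (lamP ρ * (t:ℂ)) - Complex.exp (lamM ρ * (t:ℂ))) / (lamP ρ - lamM ρ)‖ ≤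
        t * Real.exp (-E * t) := by
    intro t ht ρ hρ
    obtain ⟨hρ1, hρ2⟩ := hρ
    have hρ0 : 0 < ρ := lt_of_lt_of_le (Real.rpow_pos_of_pos (by norm_num) _) hρ1
    have hlow : ∀ c : ℝ, 0 ≤ c → (2:ℝ) ^ (-3/(1-2*σ) * c) ≤ ρ ^ c := by
      intro c hc
      rw [Real.rpow_mul (by norm_num : (0:ℝ) ≤ 2)]
      exact Real.rpow_le_rpow (le_of_lt (Real.rpow_pos_of_pos (by norm_num) _)) hρ1 hc
    have fact1 : E ≤ ρ ^ (2*σ) / 2 := by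
      have h1 : (2:ℝ) ^ (-3/(1-2*σ) * (2*σ)) ≤ ρ ^ (2*σ) := hlow (2*σ) (by linarith)
      have h2 : E ≤ (2:ℝ) ^ (-3/(1-2*σ) * (2*σ) + (-1)) := by
        rw [hEdef]
        apply (Real.rpow_le_rpow_left_iff (by norm_num : (1:ℝ) < 2)).2
        rw [div_le_iff₀ hβ]
        have heq : (-3/(1-2*σ) * (2*σ) + (-1)) * (1-2*σ) = -6*σ - (1-2*σ) := by
          field_simp
          try ring
        rw [heq]
        nlinarith
      have h3 : (2:ℝ) ^ (-3/(1-2*σ) * (2*σ) + (-1)) = (2:ℝ) ^ (-3/(1-2*σ) * (2*σ)) / 2 := by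
        rw [Real.rpow_add (by norm_num : (0:ℝ) < 2), Real.rpow_neg_one]; ring
      rw [h3] at h2
      linarith
    have fact2 : E ≤ ρ ^ (2 - 2*σ) := by
      have h1 : (2:ℝ) ^ (-3/(1-2*σ) * (2 - 2*σ)) ≤ ρ ^ (2 - 2*σ) := hlow _ (by linarith)
      have h2 : E ≤ (2:ℝ) ^ (-3/(1-2*σ) * (2 - 2*σ)) := by
        rw [hEdef]
        apply (Real.rpow_le_rpow_left_iff (by norm_num : (1:ℝ) < 2)).2
        rw [div_le_iff₀ hβ]
        have heq : -3/(1-2*σ) * (2 - 2*σ) * (1-2*σ) = -3 * (2 - 2*σ) := by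
          field_simp
          try ring
        rw [heq]
        nlinarith
      linarith
    have hsq : ρ ^ (2*(1-2*σ)) = (ρ ^ (1-2*σ)) ^ 2 := by
      rw [← Real.rpow_natCast (ρ ^ (1-2*σ)) 2, ← Real.rpow_mul hρ0.le]
      norm_num
      ring_nf
    have hρβ : 0 < ρ ^ (1-2*σ) := Real.rpow_pos_of_pos hρ0 _
    have hmul : ρ ^ (2*σ) * ρ ^ (2*(1-2*σ)) = ρ ^ (2 - 2*σ) := by
      rw [← Real.rpow_add hρ0]; ring_nf
    rcases lt_trichotomy (ρ ^ (1-2*σ)) (1/2) with hc | hc | hc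
    · -- real roots case
      rw [hlamP1 ρ hρ0 hc, hlamM1 ρ hρ0 hc]
      have hx1 : 4 * ρ ^ (2*(1-2*σ)) < 1 := by
        rw [hsq]; nlinarith
      have hx0 : 0 < ρ ^ (2*(1-2*σ)) := Real.rpow_pos_of_pos hρ0 _
      have hs0 : 0 < Real.sqrt (1 - 4*ρ ^ (2*(1-2*σ))) := Real.sqrt_pos.2 (by linarith)
      apply aux_real
      · have : 0 < ρ ^ (2*σ) / 2 := by positivity
        nlinarith
      · -- A ≤ -E
        have hs_le : Real.sqrt (1 - 4*ρ ^ (2*(1-2*σ))) ≤ 1 - 2 * ρ ^ (2*(1-2*σ)) := by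
          have h4 : (1 : ℝ) - 4*ρ ^ (2*(1-2*σ)) ≤ (1 - 2 * ρ ^ (2*(1-2*σ)))^2 := by nlinarith
          calc Real.sqrt (1 - 4*ρ ^ (2*(1-2*σ))) ≤
                Real.sqrt ((1 - 2 * ρ ^ (2*(1-2*σ)))^2) := Real.sqrt_le_sqrt h4
            _ = 1 - 2 * ρ ^ (2*(1-2*σ)) := Real.sqrt_sq (by linarith)
        have h1 : ρ ^ (2*σ) / 2 * (-1 + Real.sqrt (1 - 4*ρ ^ (2*(1-2*σ)))) ≤
            ρ ^ (2*σ) / 2 * (-(2 * ρ ^ (2*(1-2*σ)))) := by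
          apply mul_le_mul_of_nonneg_left _ (by positivity)
          linarith
        have h2 : ρ ^ (2*σ) / 2 * (-(2 * ρ ^ (2*(1-2*σ)))) = -(ρ ^ (2-2*σ)) := by
          rw [← hmul]; ring
        rw [h2] at h1
        linarith
      · exact ht
    · -- equal roots case
      obtain ⟨hP, hM⟩ := hlameq ρ hρ0 hc
      rw [hP, hM]
      simp only [sub_self, zero_div, norm_zero]
      positivity
    · -- complex roots case
      rw [hlamP2 ρ hρ0 hc, hlamM2 ρ hρ0 hc]
      have hx1 : 1 < 4 * ρ ^ (2*(1-2*σ)) := by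
        rw [hsq]; nlinarith
      apply aux_complex
      · positivity
      · exact Real.sqrt_pos.2 (by linarith)
      · exact ht
      · linarith [fact1]
  constructor
  · intro t ht ρ hρ
    refine (main t ht ρ hρ).trans (le_of_eq ?_)
    rw [← h2ε]
    ring_nf
  · refine ⟨ε⁻¹, by positivity, ?_⟩
    intro t ht ρ hρ
    have h1 := main t ht ρ hρ
    have h2 : t * Real.exp (-E * t) ≤ ε⁻¹ * Real.exp (-ε * t) := by
      have h3 : ε * t ≤ Real.exp (ε * t) := by
        have := Real.add_one_le_exp (ε * t); linarith
      have h4 : Real.exp (ε * t) * Real.exp (-E * t) = Real.exp (-ε * t) := by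
        rw [← Real.exp_add, ← h2ε]; ring_nf
      rw [inv_mul_eq_div, le_div_iff₀ hε]
      calc t * Real.exp (-E*t) * ε = (ε * t) * Real.exp (-E*t) := by ring
        _ ≤ Real.exp (ε*t) * Real.exp (-E*t) :=
            mul_le_mul_of_nonneg_right h3 (Real.exp_pos _).le
        _ = Real.exp (-ε*t) := h4
    exact h1.trans h2
end

section
/- Let σ ∈ (0,1/2). For |ξ| ≥ 1 and t ≥ 0, the high-frequency symbols K̂₁^±(t,ξ) = ±e^{λ±(|ξ|)t}/(λ₊(|ξ|) - λ₋(|ξ|)) (where λ± are as in the complex case, with real part -|ξ|^{2σ}/2 and |λ₊ - λ₋| = |ξ|^{2σ}√(4|ξ|^{2(1-2σ)}-1)) satisfy ⟨ξ⟩ |K̂₁^±(t,ξ)| ≤ C e^{-t/2} for a constant C depending only on σ and n. -/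
/-!
The gap `λ₊ - λ₋ = ρ^{2σ} i √(4ρ^{2(1-2σ)} - 1)` has squared modulus `4ρ² - ρ^{4σ}`, which
dominates `1 + ρ² = ⟨ρ⟩²` as soon as `ρ ≥ 1` and `σ ≤ 1/2`; and `|e^{λ±t}| = e^{-ρ^{2σ}t/2} ≤ e^{-t/2}`
since `ρ^{2σ} ≥ 1`. Hence the claim holds with `C = 1`.
-/

open Complex

theorem norm_exp_ofReal_mul_neg_one_add_I_mul (a s t : ℝ) :
    ‖exp ((a : ℂ) * (-1 + I * (s : ℂ)) * (t : ℂ))‖ = Real.exp (-a * t) := by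
  rw [norm_exp]
  congr 1
  simp

theorem norm_exp_ofReal_mul_neg_one_sub_I_mul (a s t : ℝ) :
    ‖exp ((a : ℂ) * (-1 - I * (s : ℂ)) * (t : ℂ))‖ = Real.exp (-a * t) := by
  rw [norm_exp]
  congr 1
  simp

section HighFrequency

variable {ρ σ : ℝ}

theorem rpow_two_mul_sq_mul_gap (hρ : 0 < ρ) :
    (ρ ^ (2 * σ)) ^ 2 * (4 * ρ ^ (2 * (1 - 2 * σ)) - 1) = 4 * ρ ^ 2 - ρ ^ (4 * σ) := by
  rw [mul_sub, mul_one, ← Real.rpow_natCast, ← Real.rpow_mul hρ.le, mul_left_comm,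
    ← Real.rpow_add hρ, ← Real.rpow_natCast ρ 2]
  ring_nf

theorem sqrt_one_add_sq_le_gap (hρ : 1 ≤ ρ) (hσ : σ ≤ 1 / 2) :
    √(1 + ρ ^ 2) ≤ ρ ^ (2 * σ) * √(4 * ρ ^ (2 * (1 - 2 * σ)) - 1) := by
  have hρ0 : 0 < ρ := zero_lt_one.trans_le hρ
  have hsmall : ρ ^ (4 * σ) ≤ ρ ^ 2 := by
    rw [← Real.rpow_two]
    exact Real.rpow_le_rpow_of_exponent_le hρ (by linarith)
  have hpos : 0 ≤ 4 * ρ ^ (2 * (1 - 2 * σ)) - 1 := by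
    linarith [Real.one_le_rpow hρ (show 0 ≤ 2 * (1 - 2 * σ) by linarith)]
  rw [← Real.sqrt_sq (Real.rpow_nonneg hρ0.le _), ← Real.sqrt_mul (sq_nonneg _),
    rpow_two_mul_sq_mul_gap hρ0]
  exact Real.sqrt_le_sqrt (by nlinarith)

theorem sqrt_one_add_sq_mul_norm_div_gap_le {t : ℝ} {w : ℂ} (hρ : 1 ≤ ρ) (hσ0 : 0 ≤ σ)
    (hσ : σ ≤ 1 / 2) (ht : 0 ≤ t) (hw : ‖w‖ = Real.exp (-(ρ ^ (2 * σ) / 2) * t)) :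
    √(1 + ρ ^ 2) *
        ‖w / (((ρ ^ (2 * σ) : ℝ) : ℂ) * I * ((√(4 * ρ ^ (2 * (1 - 2 * σ)) - 1) : ℝ) : ℂ))‖ ≤
      Real.exp (-t / 2) := by
  have ha : 1 ≤ ρ ^ (2 * σ) := Real.one_le_rpow hρ (by linarith)
  have hgap := sqrt_one_add_sq_le_gap hρ hσ
  have hgap_pos : 0 < ρ ^ (2 * σ) * √(4 * ρ ^ (2 * (1 - 2 * σ)) - 1) :=
    (Real.sqrt_pos.2 (by positivity)).trans_le hgap
  have hdecay : Real.exp (-(ρ ^ (2 * σ) / 2) * t) ≤ Real.exp (-t / 2) :=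
    Real.exp_le_exp.2 (by nlinarith)
  have hden : ‖((ρ ^ (2 * σ) : ℝ) : ℂ) * I * ((√(4 * ρ ^ (2 * (1 - 2 * σ)) - 1) : ℝ) : ℂ)‖ =
      ρ ^ (2 * σ) * √(4 * ρ ^ (2 * (1 - 2 * σ)) - 1) := by
    simp [abs_of_pos (zero_lt_one.trans_le ha)]
  rw [norm_div, hw, hden, mul_div_assoc', div_le_iff₀ hgap_pos]
  calc √(1 + ρ ^ 2) * Real.exp (-(ρ ^ (2 * σ) / 2) * t)
      ≤ ρ ^ (2 * σ) * √(4 * ρ ^ (2 * (1 - 2 * σ)) - 1) * Real.exp (-t / 2) :=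
        mul_le_mul hgap hdecay (Real.exp_pos _).le hgap_pos.le
    _ = Real.exp (-t / 2) * (ρ ^ (2 * σ) * √(4 * ρ ^ (2 * (1 - 2 * σ)) - 1)) := mul_comm _ _

end HighFrequency

theorem stmt_11_general (σ : ℝ) (hσ : σ ∈ Set.Ioo (0:ℝ) (1/2)) :
    ∃ C : ℝ, 0 < C ∧ ∀ t : ℝ, 0 ≤ t → ∀ ρ : ℝ, 1 ≤ ρ →
      Real.sqrt (1 + ρ^2) *
        ‖Complex.exp (((ρ ^ (2*σ) / 2 : ℝ) : ℂ) *
            (-1 + Complex.I * ((Real.sqrt (4*ρ ^ (2*(1-2*σ)) - 1) : ℝ) : ℂ)) * (t:ℂ)) /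
          (((ρ ^ (2*σ) : ℝ) : ℂ) * Complex.I *
            ((Real.sqrt (4*ρ ^ (2*(1-2*σ)) - 1) : ℝ) : ℂ))‖ ≤ C * Real.exp (-t/2) ∧
      Real.sqrt (1 + ρ^2) *
        ‖-Complex.exp (((ρ ^ (2*σ) / 2 : ℝ) : ℂ) *
            (-1 - Complex.I * ((Real.sqrt (4*ρ ^ (2*(1-2*σ)) - 1) : ℝ) : ℂ)) * (t:ℂ)) /
          (((ρ ^ (2*σ) : ℝ) : ℂ) * Complex.I *
            ((Real.sqrt (4*ρ ^ (2*(1-2*σ)) - 1) : ℝ) : ℂ))‖ ≤ C * Real.exp (-t/2) := by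
  refine ⟨1, one_pos, fun t ht ρ hρ => ?_⟩
  rw [one_mul]
  exact ⟨sqrt_one_add_sq_mul_norm_div_gap_le hρ hσ.1.le hσ.2.le ht
      (norm_exp_ofReal_mul_neg_one_add_I_mul _ _ _),
    sqrt_one_add_sq_mul_norm_div_gap_le hρ hσ.1.le hσ.2.le ht
      (by rw [norm_neg, norm_exp_ofReal_mul_neg_one_sub_I_mul])⟩

/-- high-frequency bound ⟨ξ⟩|K̂₁^±(t,ξ)| ≤ C e^{-t/2} for |ξ| ≥ 1,
where K̂₁^± = ±e^{λ±t}/(λ₊ - λ₋), λ± = (ρ^{2σ}/2)(-1 ± i√(4ρ^{2(1-2σ)}-1)),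
λ₊ - λ₋ = ρ^{2σ} i √(4ρ^{2(1-2σ)}-1), ρ = |ξ|. -/
theorem stmt_11 (n : ℕ) (σ : ℝ) (hσ : σ ∈ Set.Ioo (0:ℝ) (1/2)) :
    ∃ C : ℝ, 0 < C ∧ ∀ t : ℝ, 0 ≤ t → ∀ ρ : ℝ, 1 ≤ ρ →
      Real.sqrt (1 + ρ^2) *
        ‖Complex.exp (((ρ ^ (2*σ) / 2 : ℝ) : ℂ) *
            (-1 + Complex.I * ((Real.sqrt (4*ρ ^ (2*(1-2*σ)) - 1) : ℝ) : ℂ)) * (t:ℂ)) /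
          (((ρ ^ (2*σ) : ℝ) : ℂ) * Complex.I *
            ((Real.sqrt (4*ρ ^ (2*(1-2*σ)) - 1) : ℝ) : ℂ))‖ ≤ C * Real.exp (-t/2) ∧
      Real.sqrt (1 + ρ^2) *
        ‖-Complex.exp (((ρ ^ (2*σ) / 2 : ℝ) : ℂ) *
            (-1 - Complex.I * ((Real.sqrt (4*ρ ^ (2*(1-2*σ)) - 1) : ℝ) : ℂ)) * (t:ℂ)) /
          (((ρ ^ (2*σ) : ℝ) : ℂ) * Complex.I *
            ((Real.sqrt (4*ρ ^ (2*(1-2*σ)) - 1) : ℝ) : ℂ))‖ ≤ C * Real.exp (-t/2) :=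
  stmt_11_general σ hσ
end

section
/- Let n ≥ 1, q ∈ (1,2), and δ > n(1/q - 1/2) > 0. Then for every measurable u on ℝⁿ, ‖u‖_{L^q} ≤ C ‖u‖_{L²}^{1 - (n/δ)(2-q)/(2q)} ‖|·|^δ u‖_{L²}^{(n/δ)(2-q)/(2q)}, provided the right-hand side is finite. -/
/-!
Split `‖u‖_q` over the ball `‖x‖ ≤ R` and its complement. On the ball, Hölder against the
indicator gives `‖u‖_q ≤ |B_R|^(1/q - 1/2) ‖u‖₂ ∼ R^κ ‖u‖₂` with `κ = n (1/q - 1/2)`. Outside,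
write `u = ‖x‖^(-δ) · ‖x‖^δ u` and use Hölder with `1/q = 1/r + 1/2`: since `δ r > n`, the
function `‖x‖^(-δ)` is in `L^r` off the ball, with norm `∼ R^(κ - δ)` by scaling. Hence
`‖u‖_q ≲ R^κ ‖u‖₂ + R^(κ - δ) ‖‖x‖^δ u‖₂` for every `R > 0`, and `R^δ = ‖‖x‖^δ u‖₂ / ‖u‖₂`
makes both terms equal to `‖u‖₂^(1 - κ/δ) ‖‖x‖^δ u‖₂^(κ/δ)`.
-/

open MeasureTheory Metric ENNReal Module

section Holder

variable {α : Type*} [MeasurableSpace α] {μ : Measure α} {s : Set α}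

theorem eLpNorm_indicator_le_eLpNorm_mul_measure_rpow {F : Type*} [NormedAddCommGroup F]
    {f : α → F} (hs : MeasurableSet s) {p q : ℝ≥0∞} (hpq : p ≤ q)
    (hf : AEStronglyMeasurable f μ) :
    eLpNorm (s.indicator f) p μ ≤ eLpNorm f q μ * μ s ^ (1 / p.toReal - 1 / q.toReal) := by
  rw [eLpNorm_indicator_eq_eLpNorm_restrict hs, ← Measure.restrict_apply_univ]
  exact (eLpNorm_le_eLpNorm_mul_rpow_measure_univ hpq hf.restrict).trans
    (mul_le_mul_left (eLpNorm_restrict_le f q μ s) _)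

theorem eLpNorm_indicator_le_eLpNorm_indicator_mul {f v w : α → ℝ} (hs : MeasurableSet s)
    {p q r : ℝ≥0∞} [HolderTriple r q p] (hv : AEStronglyMeasurable v μ)
    (hwf : AEStronglyMeasurable (fun x => w x * f x) μ) (hvw : ∀ x ∈ s, v x * w x = 1) :
    eLpNorm (s.indicator f) p μ ≤
      eLpNorm (s.indicator v) r μ * eLpNorm (fun x => w x * f x) q μ := by
  have hfactor : s.indicator f = s.indicator v • fun x => w x * f x := by
    ext x
    by_cases hx : x ∈ s
    · simp [hx, ← mul_assoc, hvw x hx]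
    · simp [hx]
  rw [hfactor]
  exact eLpNorm_smul_le_mul_eLpNorm hwf (hv.indicator hs)

end Holder

theorem holderTriple_ofReal_two_mul_div_two_sub {q : ℝ} (hq0 : 0 < q) (hq2 : q < 2) :
    HolderTriple (ENNReal.ofReal (2 * q / (2 - q))) 2 (ENNReal.ofReal q) := by
  have h2q : 0 < 2 - q := by linarith
  constructor
  rw [← ENNReal.ofReal_inv_of_pos (by positivity), ← ENNReal.ofReal_inv_of_pos hq0,
    ← ENNReal.ofReal_ofNat, ← ENNReal.ofReal_inv_of_pos two_pos,
    ← ENNReal.ofReal_add (by positivity) (by positivity)]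
  congr 1
  field_simp
  ring

theorem exists_rpow_mul_eq_rpow_mul_rpow {A B : ℝ≥0∞} (hA0 : A ≠ 0) (hA : A ≠ ⊤) (hB0 : B ≠ 0)
    (hB : B ≠ ⊤) (κ : ℝ) {δ : ℝ} (hδ : δ ≠ 0) :
    ∃ R : ℝ, 0 < R ∧ ENNReal.ofReal R ^ κ * A = A ^ (1 - κ / δ) * B ^ (κ / δ) ∧
      ENNReal.ofReal R ^ (κ - δ) * B = A ^ (1 - κ / δ) * B ^ (κ / δ) := by
  have hBA0 : B / A ≠ 0 := ENNReal.div_ne_zero.2 ⟨hB0, hA⟩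
  have hBA : B / A ≠ ⊤ := ENNReal.div_ne_top hB hA0
  set T := (B / A) ^ δ⁻¹
  have hT0 : T ≠ 0 := (ENNReal.rpow_pos (pos_iff_ne_zero.2 hBA0) hBA).ne'
  have hT : T ≠ ⊤ := ENNReal.rpow_ne_top_of_ne_zero hBA0 hBA
  have hBT : B = A * T ^ δ := by
    rw [← ENNReal.rpow_mul, inv_mul_cancel₀ hδ, ENNReal.rpow_one, ENNReal.mul_div_cancel hA0 hA]
  have hAB : A ^ (1 - κ / δ) * B ^ (κ / δ) = A * T ^ κ := by
    rw [hBT, ENNReal.mul_rpow_of_ne_top hA (by finiteness), ← ENNReal.rpow_mul,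
      mul_div_cancel₀ _ hδ, ← mul_assoc, ← ENNReal.rpow_add _ _ hA0 hA, sub_add_cancel,
      ENNReal.rpow_one]
  refine ⟨T.toReal, ENNReal.toReal_pos hT0 hT, ?_, ?_⟩ <;> rw [ENNReal.ofReal_toReal hT, hAB]
  · exact mul_comm _ _
  · rw [hBT, mul_left_comm, ← ENNReal.rpow_add _ _ hT0 hT, sub_add_cancel]

theorem le_mul_rpow_mul_rpow_of_forall_radius {X A B c₁ c₂ : ℝ≥0∞} {κ δ : ℝ} (hκ : 0 < κ)
    (hκδ : κ < δ) (hc₁ : c₁ ≠ 0) (hX : A = 0 ∨ B = 0 → X = 0)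
    (hR : ∀ R : ℝ, 0 < R →
      X ≤ ENNReal.ofReal R ^ κ * (c₁ * A) + ENNReal.ofReal R ^ (κ - δ) * (c₂ * B)) :
    X ≤ (c₁ + c₂) * A ^ (1 - κ / δ) * B ^ (κ / δ) := by
  have hδ : 0 < δ := hκ.trans hκδ
  have ha0 : 0 < κ / δ := div_pos hκ hδ
  have ha1 : 0 < 1 - κ / δ := sub_pos.2 ((div_lt_one hδ).2 hκδ)
  by_cases hzero : A = 0 ∨ B = 0
  · simp [hX hzero]
  push Not at hzero
  by_cases htop : A = ⊤ ∨ B = ⊤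
  · rcases htop with hA | hB
    · have hB' : B ^ (κ / δ) ≠ 0 := by
        rw [Ne, ENNReal.rpow_eq_zero_iff]
        rintro (⟨h, -⟩ | ⟨-, h⟩)
        exacts [hzero.2 h, lt_asymm h ha0]
      rw [hA, ENNReal.top_rpow_of_pos ha1, ENNReal.mul_top (by simp [hc₁]), ENNReal.top_mul hB']
      exact le_top
    · have hA' : A ^ (1 - κ / δ) ≠ 0 := by
        rw [Ne, ENNReal.rpow_eq_zero_iff]
        rintro (⟨h, -⟩ | ⟨-, h⟩)
        exacts [hzero.1 h, lt_asymm h ha1]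
      rw [hB, ENNReal.top_rpow_of_pos ha0, ENNReal.mul_top (mul_ne_zero (by simp [hc₁]) hA')]
      exact le_top
  push Not at htop
  obtain ⟨R, hR0, hRA, hRB⟩ :=
    exists_rpow_mul_eq_rpow_mul_rpow hzero.1 htop.1 hzero.2 htop.2 κ hδ.ne'
  calc X ≤ ENNReal.ofReal R ^ κ * (c₁ * A) + ENNReal.ofReal R ^ (κ - δ) * (c₂ * B) := hR R hR0
    _ = (c₁ + c₂) * A ^ (1 - κ / δ) * B ^ (κ / δ) := by
        rw [mul_left_comm _ c₁, hRA, mul_left_comm _ c₂, hRB]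
        ring

section AddHaar

variable {E : Type*} [NormedAddCommGroup E] [NormedSpace ℝ E] [FiniteDimensional ℝ E]
  [MeasurableSpace E] [BorelSpace E] (μ : Measure E) [μ.IsAddHaarMeasure]

theorem lintegral_comp_smul (f : E → ℝ≥0∞) {R : ℝ} (hR : R ≠ 0) :
    ∫⁻ x, f (R • x) ∂μ = ENNReal.ofReal |(R ^ finrank ℝ E)⁻¹| * ∫⁻ x, f x ∂μ := by
  rw [← smul_eq_mul, ← lintegral_smul_measure, ← Measure.map_addHaar_smul μ hR]
  exact (lintegral_map_equiv f (MeasurableEquiv.smul₀ R hR)).symm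

theorem eLpNorm_comp_smul {F : Type*} [NormedAddCommGroup F] (f : E → F) {p : ℝ≥0∞}
    (hp0 : p ≠ 0) (hp : p ≠ ⊤) {R : ℝ} (hR : R ≠ 0) :
    eLpNorm (fun x => f (R • x)) p μ =
      ENNReal.ofReal |R| ^ (-(finrank ℝ E : ℝ) / p.toReal) * eLpNorm f p μ := by
  have hjac : ENNReal.ofReal |(R ^ finrank ℝ E)⁻¹| =
      ENNReal.ofReal |R| ^ (-(finrank ℝ E : ℝ)) := by
    rw [abs_inv, abs_pow, ENNReal.ofReal_inv_of_pos (by positivity),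
      ENNReal.ofReal_pow (abs_nonneg R), ENNReal.rpow_neg, ENNReal.rpow_natCast]
  simp only [eLpNorm_eq_lintegral_rpow_enorm_toReal hp0 hp]
  rw [lintegral_comp_smul μ (fun x => ‖f x‖ₑ ^ p.toReal) hR, hjac,
    ENNReal.mul_rpow_of_nonneg _ _ (by positivity), ← ENNReal.rpow_mul, ← div_eq_mul_one_div]

theorem eLpNorm_indicator_compl_closedBall_norm_rpow_neg {δ : ℝ} {p : ℝ≥0∞} (hp0 : p ≠ 0)
    (hp : p ≠ ⊤) {R : ℝ} (hR : 0 < R) :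
    eLpNorm ((closedBall (0 : E) R)ᶜ.indicator fun x => ‖x‖ ^ (-δ)) p μ =
      ENNReal.ofReal R ^ ((finrank ℝ E : ℝ) / p.toReal - δ) *
        eLpNorm ((closedBall (0 : E) 1)ᶜ.indicator fun x => ‖x‖ ^ (-δ)) p μ := by
  have hdilate : ((closedBall (0 : E) R)ᶜ.indicator fun x => ‖x‖ ^ (-δ)) =
      R ^ (-δ) • fun x => (closedBall (0 : E) 1)ᶜ.indicator (fun x => ‖x‖ ^ (-δ)) (R⁻¹ • x) := by
    ext x
    have hnorm : ‖R⁻¹ • x‖ = R⁻¹ * ‖x‖ := by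
      rw [norm_smul, Real.norm_of_nonneg (inv_nonneg.2 hR.le)]
    have hmem : 1 < ‖R⁻¹ • x‖ ↔ R < ‖x‖ := by rw [hnorm, lt_inv_mul_iff₀ hR, mul_one]
    by_cases hx : R < ‖x‖
    · rw [Set.indicator_of_mem (by simpa using hx), Pi.smul_apply,
        Set.indicator_of_mem (by simpa using hmem.2 hx), hnorm,
        Real.mul_rpow (by positivity) (norm_nonneg x), Real.inv_rpow hR.le, smul_eq_mul,
        ← mul_assoc, mul_inv_cancel₀ (by positivity), one_mul]
    · simp [hx, hmem]
  rw [hdilate, eLpNorm_const_smul, eLpNorm_comp_smul μ _ hp0 hp (inv_ne_zero hR.ne'), ← mul_assoc,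
    Real.enorm_eq_ofReal (Real.rpow_nonneg hR.le _), ← ENNReal.ofReal_rpow_of_pos hR, abs_inv,
    abs_of_pos hR, ENNReal.ofReal_inv_of_pos hR, ENNReal.inv_rpow, ← ENNReal.rpow_neg, neg_div,
    neg_neg, ← ENNReal.rpow_add _ _ (by simpa using hR) ENNReal.ofReal_ne_top, neg_add_eq_sub]

theorem integrableOn_norm_rpow_neg_compl_closedBall {s : ℝ} (hs : (finrank ℝ E : ℝ) < s) :
    IntegrableOn (fun x : E => ‖x‖ ^ (-s)) (closedBall (0 : E) 1)ᶜ μ := by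
  have hs0 : 0 < s := (Nat.cast_nonneg _).trans_lt hs
  refine ((integrable_one_add_norm hs).const_mul (2 ^ s)).integrableOn.mono'
    (measurable_norm.pow_const _).aestronglyMeasurable ?_
  refine ae_restrict_of_forall_mem measurableSet_closedBall.compl fun x hx => ?_
  have hx : 1 < ‖x‖ := by simpa using hx
  rw [Real.norm_of_nonneg (by positivity)]
  calc ‖x‖ ^ (-s) ≤ ((1 + ‖x‖) / 2) ^ (-s) :=
        Real.rpow_le_rpow_of_nonpos (by positivity) (by linarith) (by linarith)
    _ = 2 ^ s * (1 + ‖x‖) ^ (-s) := by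
        rw [Real.div_rpow (by positivity) zero_le_two, Real.rpow_neg zero_le_two, div_inv_eq_mul,
          mul_comm]

theorem memLp_indicator_compl_closedBall_norm_rpow_neg {δ : ℝ} {p : ℝ≥0∞} (hp0 : p ≠ 0)
    (hp : p ≠ ⊤) (hδp : (finrank ℝ E : ℝ) < δ * p.toReal) :
    MemLp ((closedBall (0 : E) 1)ᶜ.indicator fun x => ‖x‖ ^ (-δ)) p μ := by
  rw [memLp_indicator_iff_restrict measurableSet_closedBall.compl,
    ← integrable_norm_rpow_iff (measurable_norm.pow_const _).aestronglyMeasurable hp0 hp]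
  refine (integrableOn_norm_rpow_neg_compl_closedBall μ hδp).congr_fun (fun x _ => ?_)
    measurableSet_closedBall.compl
  rw [Real.norm_of_nonneg (by positivity), ← Real.rpow_mul (norm_nonneg x), neg_mul]

theorem eLpNorm_le_rpow_mul_add_rpow_mul {q : ℝ} (hq1 : 1 ≤ q) (hq2 : q < 2) (δ : ℝ)
    {u : E → ℝ} (hu : AEStronglyMeasurable u μ) {R : ℝ} (hR : 0 < R) :
    eLpNorm u (ENNReal.ofReal q) μ ≤
      ENNReal.ofReal R ^ ((finrank ℝ E : ℝ) * (1 / q - 1 / 2)) *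
          (μ (closedBall 0 1) ^ (1 / q - 1 / 2) * eLpNorm u 2 μ) +
        ENNReal.ofReal R ^ ((finrank ℝ E : ℝ) * (1 / q - 1 / 2) - δ) *
          (eLpNorm ((closedBall (0 : E) 1)ᶜ.indicator fun x => ‖x‖ ^ (-δ))
              (ENNReal.ofReal (2 * q / (2 - q))) μ *
            eLpNorm (fun x => ‖x‖ ^ δ * u x) 2 μ) := by
  have hq0 : 0 < q := by linarith
  have h2q : 0 < 2 - q := by linarith
  have := holderTriple_ofReal_two_mul_div_two_sub hq0 hq2
  set S := closedBall (0 : E) R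
  have hS : MeasurableSet S := measurableSet_closedBall
  have hweight : ∀ x ∈ Sᶜ, ‖x‖ ^ (-δ) * ‖x‖ ^ δ = 1 := fun x hx => by
    rw [← Real.rpow_add (hR.trans (by simpa [S] using hx)), neg_add_cancel, Real.rpow_zero]
  have hexp : (finrank ℝ E : ℝ) / (2 * q / (2 - q)) = finrank ℝ E * (1 / q - 1 / 2) := by
    field_simp
  calc eLpNorm u (ENNReal.ofReal q) μ
      ≤ eLpNorm (S.indicator u) (ENNReal.ofReal q) μ +
          eLpNorm (Sᶜ.indicator u) (ENNReal.ofReal q) μ := by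
        conv_lhs => rw [← Set.indicator_self_add_compl S u]
        exact eLpNorm_add_le (hu.indicator hS) (hu.indicator hS.compl) (by simpa using hq1)
    _ ≤ eLpNorm u 2 μ * μ S ^ (1 / (ENNReal.ofReal q).toReal - 1 / (2 : ℝ≥0∞).toReal) +
          eLpNorm (Sᶜ.indicator fun x => ‖x‖ ^ (-δ)) (ENNReal.ofReal (2 * q / (2 - q))) μ *
            eLpNorm (fun x => ‖x‖ ^ δ * u x) 2 μ :=
        add_le_add
          (eLpNorm_indicator_le_eLpNorm_mul_measure_rpow hS (by simpa using hq2.le) hu)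
          (eLpNorm_indicator_le_eLpNorm_indicator_mul hS.compl
            (measurable_norm.pow_const _).aestronglyMeasurable
            ((measurable_norm.pow_const _).aestronglyMeasurable.mul hu) hweight)
    _ = _ := by
      rw [Measure.addHaar_closedBall' μ _ hR.le,
        eLpNorm_indicator_compl_closedBall_norm_rpow_neg μ
          (ENNReal.ofReal_pos.2 (by positivity)).ne' ENNReal.ofReal_ne_top hR]
      simp only [ENNReal.toReal_ofReal hq0.le,
        ENNReal.toReal_ofReal (by positivity : 0 ≤ 2 * q / (2 - q)), ENNReal.toReal_ofNat, hexp]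
      rw [ENNReal.mul_rpow_of_nonneg _ _ (sub_nonneg.2 (one_div_le_one_div_of_le hq0 hq2.le)),
        ENNReal.ofReal_pow hR.le, ← ENNReal.rpow_natCast, ← ENNReal.rpow_mul]
      ring

theorem exists_eLpNorm_le_mul_rpow_mul_rpow [Nontrivial E] {q : ℝ} (hq1 : 1 ≤ q) (hq2 : q < 2)
    {δ : ℝ} (hδ : (finrank ℝ E : ℝ) * (1 / q - 1 / 2) < δ) :
    ∃ C : ℝ≥0∞, C ≠ 0 ∧ C ≠ ⊤ ∧ ∀ u : E → ℝ, AEStronglyMeasurable u μ →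
      eLpNorm u (ENNReal.ofReal q) μ ≤
        C * eLpNorm u 2 μ ^ (1 - (finrank ℝ E : ℝ) * (1 / q - 1 / 2) / δ) *
          eLpNorm (fun x => ‖x‖ ^ δ * u x) 2 μ ^ ((finrank ℝ E : ℝ) * (1 / q - 1 / 2) / δ) := by
  set κ := (finrank ℝ E : ℝ) * (1 / q - 1 / 2)
  have hq0 : 0 < q := by linarith
  have h2q : 0 < 2 - q := by linarith
  have hq2' : 0 < 1 / q - 1 / 2 := sub_pos.2 (one_div_lt_one_div_of_lt hq0 hq2)
  have hκ : 0 < κ := mul_pos (by exact_mod_cast finrank_pos) hq2'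
  have hδ0 : 0 < δ := hκ.trans hδ
  set c₁ := μ (closedBall 0 1) ^ (1 / q - 1 / 2)
  set c₂ := eLpNorm ((closedBall (0 : E) 1)ᶜ.indicator fun x => ‖x‖ ^ (-δ))
    (ENNReal.ofReal (2 * q / (2 - q))) μ
  have hc₁0 : c₁ ≠ 0 :=
    (ENNReal.rpow_pos (measure_closedBall_pos μ 0 one_pos) measure_closedBall_lt_top.ne).ne'
  have hc₁ : c₁ ≠ ⊤ := ENNReal.rpow_ne_top_of_nonneg hq2'.le measure_closedBall_lt_top.ne
  have hc₂ : c₂ ≠ ⊤ := by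
    refine (memLp_indicator_compl_closedBall_norm_rpow_neg μ
      (ENNReal.ofReal_pos.2 (by positivity)).ne' ENNReal.ofReal_ne_top ?_).eLpNorm_ne_top
    rw [ENNReal.toReal_ofReal (by positivity), ← div_lt_iff₀ (by positivity)]
    refine lt_of_eq_of_lt ?_ hδ
    simp only [κ]
    field_simp
  refine ⟨c₁ + c₂, by simp [hc₁0], ENNReal.add_ne_top.2 ⟨hc₁, hc₂⟩, fun u hu => ?_⟩
  refine le_mul_rpow_mul_rpow_of_forall_radius hκ hδ hc₁0 (fun hzero => ?_)
    fun R hR => eLpNorm_le_rpow_mul_add_rpow_mul μ hq1 hq2 δ hu hR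
  suffices u =ᵐ[μ] 0 by simp [eLpNorm_congr_ae this]
  rcases hzero with hA | hB
  · exact (eLpNorm_eq_zero_iff hu two_ne_zero).1 hA
  · filter_upwards [(eLpNorm_eq_zero_iff
      ((measurable_norm.pow_const δ).aestronglyMeasurable.mul hu) two_ne_zero).1 hB,
      μ.ae_ne 0] with x hx hx0
    simpa [Real.rpow_eq_zero_iff_of_nonneg (norm_nonneg x), hx0, hδ0.ne'] using hx

end AddHaar

theorem stmt_12_general (n : ℕ) (hn : 1 ≤ n) (q δ : ℝ) (hq : q ∈ Set.Ioo (1:ℝ) 2)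
    (hδ : (n:ℝ) * (1/q - 1/2) < δ) :
    ∃ C : ℝ, 0 < C ∧ ∀ u : EuclideanSpace ℝ (Fin n) → ℝ, Measurable u →
      eLpNorm u (ENNReal.ofReal q) volume ≤
        ENNReal.ofReal C *
          (eLpNorm u 2 volume) ^ (1 - ((n:ℝ)/δ)*(2-q)/(2*q)) *
          (eLpNorm (fun x => ‖x‖ ^ δ * u x) 2 volume) ^ (((n:ℝ)/δ)*(2-q)/(2*q)) := by
  have : NeZero n := ⟨by omega⟩
  have hexp : (n : ℝ) / δ * (2 - q) / (2 * q) = n * (1 / q - 1 / 2) / δ := by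
    have : q ≠ 0 := by linarith [hq.1]
    field_simp
  obtain ⟨C, hC0, hC, hbound⟩ := exists_eLpNorm_le_mul_rpow_mul_rpow
    (volume : Measure (EuclideanSpace ℝ (Fin n))) hq.1.le hq.2 (by simpa using hδ)
  refine ⟨C.toReal, ENNReal.toReal_pos hC0 hC, fun u hu => ?_⟩
  simpa [ENNReal.ofReal_toReal hC, hexp] using hbound u hu.aestronglyMeasurable

/-- interpolation inequality
‖u‖_{L^q} ≤ C ‖u‖_{L²}^{1-a} ‖|x|^δ u‖_{L²}^a with a = (n/δ)(2-q)/(2q),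
valid for q ∈ (1,2) and δ > n(1/q - 1/2) > 0. -/
theorem stmt_12 (n : ℕ) (hn : 1 ≤ n) (q δ : ℝ) (hq : q ∈ Set.Ioo (1:ℝ) 2)
    (hδ' : 0 < (n:ℝ) * (1/q - 1/2)) (hδ : (n:ℝ) * (1/q - 1/2) < δ) :
    ∃ C : ℝ, 0 < C ∧ ∀ u : EuclideanSpace ℝ (Fin n) → ℝ, Measurable u →
      eLpNorm u (ENNReal.ofReal q) volume ≤
        ENNReal.ofReal C *
          (eLpNorm u 2 volume) ^ (1 - ((n:ℝ)/δ)*(2-q)/(2*q)) *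
          (eLpNorm (fun x => ‖x‖ ^ δ * u x) 2 volume) ^ (((n:ℝ)/δ)*(2-q)/(2*q)) :=
  stmt_12_general n hn q δ hq hδ
end
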